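/- arXiv:2010.00412 — 9 statements merged into one kernel-verified Lean document; each statement's English description precedes it below -/
import Mathlib

section
/- Let 0 < L ≤ U with θ = U/L > 1, C > 0, and α ≥ 1. Suppose φ: [0, C] → ℝ is non-decreasing with φ(w) = L on [0, β) for some β ∈ [0, C], φ(β) = L, φ(C) ≥ U, and φ(w)·C ≤ α·∫₀^w φ(u) du for all w ∈ [β, C]. Then α ≥ 1 + ln θ. -/
/-!
Put `F w = ∫₀^w φ`. For `β ≤ x < z ≤ C`, monotonicity gives
`F z - F x ≤ (z - x) φ z ≤ (z - x) (α / C) F z`, so the right slopes of `F` are at most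
`(α / C) F`, and Grönwall's inequality yields
`F C ≤ F β · exp (α (C - β) / C) = L β · exp (α - t)` with `t = α β / C`.
Together with `U C ≤ φ C · C ≤ α F C` this reads `θ ≤ t · exp (α - t)`, and
`log t ≤ t - 1` turns it into `log θ ≤ α - 1`.
-/

open Filter Real MeasureTheory Set Topology intervalIntegral

theorem MonotoneOn.intervalIntegral_le_mul {φ : ℝ → ℝ} {x z : ℝ}
    (hφ : MonotoneOn φ (Icc x z)) (hxz : x ≤ z) : ∫ u in x..z, φ u ≤ (z - x) * φ z := by
  have hint : IntervalIntegrable φ volume x z :=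
    (hφ.mono (by rw [uIcc_of_le hxz])).intervalIntegrable
  calc ∫ u in x..z, φ u ≤ ∫ _ in x..z, φ z :=
        integral_mono_on hxz hint intervalIntegrable_const
          fun u hu ↦ hφ hu (right_mem_Icc.2 hxz) hu.2
    _ = (z - x) * φ z := by rw [intervalIntegral.integral_const, smul_eq_mul]

theorem MonotoneOn.intervalIntegral_le_mul_exp {φ : ℝ → ℝ} {a b c K : ℝ}
    (hφ : MonotoneOn φ (Icc a b)) (hac : a ≤ c) (hcb : c ≤ b)
    (hbound : ∀ w ∈ Icc c b, φ w ≤ K * ∫ u in a..w, φ u) :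
    ∫ u in a..b, φ u ≤ (∫ u in a..c, φ u) * exp (K * (b - c)) := by
  set F : ℝ → ℝ := fun w ↦ ∫ u in a..w, φ u
  have hab : a ≤ b := hac.trans hcb
  have hint : ∀ x ∈ Icc a b, ∀ y ∈ Icc a b, IntervalIntegrable φ volume x y :=
    fun x hx y hy ↦ (hφ.mono (uIcc_subset_Icc hx hy)).intervalIntegrable
  have hcont : ContinuousOn F (Icc a b) := by
    simpa only [uIcc_of_le hab] using
      continuousOn_primitive_interval' (hint a ⟨le_rfl, hab⟩ b ⟨hab, le_rfl⟩) left_mem_uIcc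
  have hslope : ∀ x ∈ Ico c b, ∀ r, K * F x < r →
      ∃ᶠ z in 𝓝[>] x, (z - x)⁻¹ * (F z - F x) < r := by
    intro x hx r hr
    have hxb : Ioc x b ∈ 𝓝[>] x := Ioc_mem_nhdsGT hx.2
    have hlim : Tendsto (fun z ↦ K * F z) (𝓝[>] x) (𝓝 (K * F x)) := by
      refine ((hcont x ⟨hac.trans hx.1, hx.2.le⟩).mono_of_mem_nhdsWithin ?_).const_mul K
      exact mem_of_superset hxb (Ioc_subset_Icc_self.trans (Icc_subset_Icc_left (hac.trans hx.1)))
    refine Eventually.frequently ?_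
    filter_upwards [hxb, hlim.eventually (gt_mem_nhds hr)] with z hz hKz
    have hxz : 0 < z - x := sub_pos.2 hz.1
    have hFz : F z - F x = ∫ u in x..z, φ u :=
      integral_interval_sub_left
        (hint a ⟨le_rfl, hab⟩ z ⟨hac.trans (hx.1.trans hz.1.le), hz.2⟩) (hint a ⟨le_rfl, hab⟩ x ⟨hac.trans hx.1, hx.2.le⟩)
    have hinc : F z - F x ≤ (z - x) * (K * F z) := by
      rw [hFz]
      calc ∫ u in x..z, φ u ≤ (z - x) * φ z :=
            (hφ.mono (Icc_subset_Icc (hac.trans hx.1) hz.2)).intervalIntegral_le_mul hz.1.le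
        _ ≤ (z - x) * (K * F z) :=
            mul_le_mul_of_nonneg_left (hbound z ⟨hx.1.trans hz.1.le, hz.2⟩) hxz.le
    calc (z - x)⁻¹ * (F z - F x) ≤ K * F z := by
          rw [inv_mul_le_iff₀ hxz]; exact hinc
      _ < r := hKz
  have := le_gronwallBound_of_liminf_deriv_right_le (hcont.mono (Icc_subset_Icc_left hac)) hslope
    le_rfl (fun x _ ↦ (add_zero _).ge) b ⟨hcb, le_rfl⟩
  rwa [gronwallBound_ε0] at this

theorem one_add_log_le_of_le_mul_exp {θ t α : ℝ} (hθ : 0 < θ) (ht : 0 < t)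
    (h : θ ≤ t * exp (α - t)) : 1 + log θ ≤ α := by
  have hlog : log θ ≤ log t + (α - t) := by
    simpa only [log_mul ht.ne' (exp_pos _).ne', log_exp] using log_le_log hθ h
  linarith [log_le_sub_one_of_pos ht]

theorem got_sufficient_lower_bound_general (L U C θ α β : ℝ) (hL : 0 < L)
    (hθ : θ = U / L) (hθ1 : 1 < θ) (hC : 0 < C)
    (hβ : β ∈ Set.Icc (0:ℝ) C)
    (φ : ℝ → ℝ) (hmono : MonotoneOn φ (Set.Icc 0 C))
    (hflat : ∀ w ∈ Set.Ico (0:ℝ) β, φ w = L)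
    (hβval : φ β = L) (hCval : U ≤ φ C)
    (hode : ∀ w ∈ Set.Icc β C, φ w * C ≤ α * ∫ u in (0:ℝ)..w, φ u) :
    1 + Real.log θ ≤ α := by
  have hflat_int : ∫ u in (0:ℝ)..β, φ u = L * β := by
    rw [integral_congr (g := fun _ ↦ L), intervalIntegral.integral_const, smul_eq_mul, sub_zero,
      mul_comm]
    intro w hw
    rw [uIcc_of_le hβ.1] at hw
    rcases hw.2.lt_or_eq with hwβ | rfl
    exacts [hflat w ⟨hw.1, hwβ⟩, hβval]
  have hαβ : C ≤ α * β := by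
    have h := hode β ⟨le_rfl, hβ.2⟩
    rw [hβval, hflat_int] at h
    nlinarith
  have hα : 0 < α := by nlinarith [hβ.1, hβ.2]
  have hgrowth : ∫ u in (0:ℝ)..C, φ u ≤ L * β * exp (α / C * (C - β)) := by
    rw [← hflat_int]
    refine hmono.intervalIntegral_le_mul_exp hβ.1 hβ.2 fun w hw ↦ ?_
    rw [div_mul_eq_mul_div, le_div_iff₀ hC]
    exact hode w hw
  have hUC : U * C ≤ α * (L * β * exp (α / C * (C - β))) := calc
    U * C ≤ φ C * C := mul_le_mul_of_nonneg_right hCval hC.le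
    _ ≤ α * ∫ u in (0:ℝ)..C, φ u := hode C ⟨hβ.2, le_rfl⟩
    _ ≤ _ := mul_le_mul_of_nonneg_left hgrowth hα.le
  refine one_add_log_le_of_le_mul_exp (t := α * β / C) (by linarith)
    (div_pos (hC.trans_le hαβ) hC) ?_
  have hexp : α - α * β / C = α / C * (C - β) := by field_simp
  rw [hθ, hexp, div_le_iff₀ hL, div_mul_eq_mul_div, div_mul_eq_mul_div, le_div_iff₀ hC]
  linarith

theorem got_sufficient_lower_bound (L U C θ α β : ℝ) (hL : 0 < L) (hLU : L ≤ U)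
    (hθ : θ = U / L) (hθ1 : 1 < θ) (hC : 0 < C) (hα : 1 ≤ α)
    (hβ : β ∈ Set.Icc (0:ℝ) C)
    (φ : ℝ → ℝ) (hmono : MonotoneOn φ (Set.Icc 0 C))
    (hflat : ∀ w ∈ Set.Ico (0:ℝ) β, φ w = L)
    (hβval : φ β = L) (hCval : U ≤ φ C)
    (hode : ∀ w ∈ Set.Icc β C, φ w * C ≤ α * ∫ u in (0:ℝ)..w, φ u) :
    1 + Real.log θ ≤ α :=
  got_sufficient_lower_bound_general L U C θ α β hL hθ hθ1 hC hβ φ hmono hflat hβval hCval hode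
end

section
/- Let 0 < L ≤ U with θ = U/L, C > 0, and α > 0. Suppose ψ: [L, U] → [0, C] is non-decreasing, satisfies ψ(L) ≥ C/α, ψ(U) ≤ C, and p·ψ(p) − ∫_L^p ψ(u) du ≥ p·C/α for all p ∈ [L, U]. Then α ≥ 1 + ln θ. -/
/-!
With `Φ p = ∫ u in L..p, ψ u`, the hypothesis says that `(Φ p / p)' = (p ψ p - Φ p) / p² ≥ (C / α) / p`,
so `Φ U / U ≥ (C / α) log θ`, and then `C ≥ ψ U ≥ C / α + Φ U / U ≥ (C / α) (1 + log θ)`.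
Monotonicity of `ψ` gives the derivative bound without differentiating `Φ`, as the increment bound
`Φ q / q - Φ p / p ≥ (C / α) (q - p) / q`; a right-slope comparison theorem integrates it.
-/

open Set Topology

lemma mul_log_div_le_sub_of_mul_sub_div_le_sub {g : ℝ → ℝ} {a b c : ℝ} (ha : 0 < a) (hab : a ≤ b)
    (hg : ContinuousOn g (Icc a b))
    (hinc : ∀ p ∈ Ico a b, ∀ q ∈ Ioc p b, c * (q - p) / q ≤ g q - g p) :
    c * Real.log (b / a) ≤ g b - g a := by
  have hB : ∀ x, 0 < x → HasDerivAt (fun x => c * Real.log a - g a - c * Real.log x)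
      (-(c / x)) x := fun x hx => by
    simpa [div_eq_mul_inv] using
      ((Real.hasDerivAt_log hx.ne').const_mul c).const_sub (c * Real.log a - g a)
  have hfence := image_le_of_liminf_slope_right_le_deriv_boundary hg.neg (le_of_eq (by simp))
    (fun x hx => (hB x (ha.trans_le hx.1)).continuousAt.continuousWithinAt)
    (fun x hx => (hB x (ha.trans_le hx.1)).hasDerivWithinAt) ?_ (right_mem_Icc.2 hab)
  · rw [Real.log_div (ha.trans_le hab).ne' ha.ne']
    simp only [Pi.neg_apply] at hfence
    linarith
  · intro x hx r hr
    have hx0 : 0 < x := ha.trans_le hx.1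
    have hlim : ∀ᶠ z in 𝓝[>] x, -(c / z) < r :=
      nhdsWithin_le_nhds (((continuousAt_const.div continuousAt_id hx0.ne').neg).eventually
        (gt_mem_nhds hr))
    refine (hlim.and (Ioc_mem_nhdsGT hx.2)).frequently.mono fun z ⟨hzr, hz⟩ => ?_
    have hzx : 0 < z - x := sub_pos.2 hz.1
    have hgz := hinc x hx z hz
    rw [mul_div_right_comm] at hgz
    rw [slope_def_field, Pi.neg_apply, Pi.neg_apply]
    calc (-g z - -g x) / (z - x) ≤ -(c / z) := by
          rw [div_le_iff₀ hzx]
          linarith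
      _ < r := hzr

lemma MonotoneOn.intervalIntegrable_of_le {ψ : ℝ → ℝ} {a b : ℝ} (hab : a ≤ b)
    (hψ : MonotoneOn ψ (Icc a b)) : IntervalIntegrable ψ MeasureTheory.volume a b :=
  MonotoneOn.intervalIntegrable (by rwa [uIcc_of_le hab])

lemma sub_mul_le_integral_of_monotoneOn {ψ : ℝ → ℝ} {p q : ℝ} (hpq : p ≤ q)
    (hψ : MonotoneOn ψ (Icc p q)) : (q - p) * ψ p ≤ ∫ u in p..q, ψ u := by
  have hconst : ∫ _ in p..q, ψ p = (q - p) * ψ p := by simp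
  rw [← hconst]
  refine intervalIntegral.integral_mono_on hpq intervalIntegrable_const
    (hψ.intervalIntegrable_of_le hpq) fun x hx => ?_
  exact hψ (left_mem_Icc.2 hpq) hx hx.1

lemma mul_sub_div_le_integral_div_sub {ψ : ℝ → ℝ} {L U c p q : ℝ} (hL : 0 < L)
    (hψ : MonotoneOn ψ (Icc L U)) (hp : p ∈ Icc L U) (hpq : p ≤ q) (hqU : q ≤ U)
    (hineq : p * ψ p - ∫ u in L..p, ψ u ≥ p * c) :
    c * (q - p) / q ≤ (∫ u in L..q, ψ u) / q - (∫ u in L..p, ψ u) / p := by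
  have hp0 : 0 < p := hL.trans_le hp.1
  have hq0 : 0 < q := hp0.trans_le hpq
  have hsplit : ∫ u in L..q, ψ u = (∫ u in L..p, ψ u) + ∫ u in p..q, ψ u :=
    (intervalIntegral.integral_add_adjacent_intervals
      ((hψ.mono (Icc_subset_Icc le_rfl hp.2)).intervalIntegrable_of_le hp.1)
      ((hψ.mono (Icc_subset_Icc hp.1 hqU)).intervalIntegrable_of_le hpq)).symm
  have hstep := sub_mul_le_integral_of_monotoneOn hpq (hψ.mono (Icc_subset_Icc hp.1 hqU))
  have hlhs : c * (q - p) / q * (q * p) = (q - p) * (p * c) := by field_simp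
  rw [div_sub_div _ _ hq0.ne' hp0.ne', le_div_iff₀ (mul_pos hq0 hp0), hlhs, hsplit]
  linarith [mul_le_mul_of_nonneg_left hstep hp0.le,
    mul_le_mul_of_nonneg_left hineq (sub_nonneg.2 hpq)]

theorem got_necessary_lower_bound_general (L U C θ α : ℝ) (hL : 0 < L) (hLU : L ≤ U)
    (hθ : θ = U / L) (hC : 0 < C) (hα : 0 < α)
    (ψ : ℝ → ℝ) (hmono : MonotoneOn ψ (Set.Icc L U))
    (hψU : ψ U ≤ C)
    (hineq : ∀ p ∈ Set.Icc L U, p * ψ p - (∫ u in L..p, ψ u) ≥ p * C / α) :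
    α ≥ 1 + Real.log θ := by
  simp only [mul_div_assoc] at hineq
  have hU : 0 < U := hL.trans_le hLU
  have hcont : ContinuousOn (fun p => (∫ u in L..p, ψ u) / p) (Icc L U) := by
    refine ContinuousOn.div ?_ continuousOn_id fun x hx => (hL.trans_le hx.1).ne'
    rw [← uIcc_of_le hLU]
    exact intervalIntegral.continuousOn_primitive_interval'
      (hmono.intervalIntegrable_of_le hLU) left_mem_uIcc
  have hlog : C / α * Real.log θ ≤ (∫ u in L..U, ψ u) / U := by
    simpa [hθ] using mul_log_div_le_sub_of_mul_sub_div_le_sub hL hLU hcont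
      fun p hp q hq => mul_sub_div_le_integral_div_sub hL hmono (Ico_subset_Icc_self hp)
        hq.1.le hq.2 (hineq p (Ico_subset_Icc_self hp))
  have hψU' : C / α + (∫ u in L..U, ψ u) / U ≤ ψ U := by
    have hU_ineq := hineq U (right_mem_Icc.2 hLU)
    rw [add_div' _ _ _ hU.ne', div_le_iff₀ hU]
    linarith
  have hbound : C / α * (1 + Real.log θ) ≤ C := by linarith
  rw [div_mul_eq_mul_div, div_le_iff₀ hα] at hbound
  exact le_of_mul_le_mul_left hbound hC

theorem got_necessary_lower_bound (L U C θ α : ℝ) (hL : 0 < L) (hLU : L ≤ U)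
    (hθ : θ = U / L) (hC : 0 < C) (hα : 0 < α)
    (ψ : ℝ → ℝ) (hmono : MonotoneOn ψ (Set.Icc L U))
    (hrange : ∀ p ∈ Set.Icc L U, ψ p ∈ Set.Icc 0 C)
    (hψL : ψ L ≥ C / α) (hψU : ψ U ≤ C)
    (hineq : ∀ p ∈ Set.Icc L U, p * ψ p - (∫ u in L..p, ψ u) ≥ p * C / α) :
    α ≥ 1 + Real.log θ :=
  got_necessary_lower_bound_general L U C θ α hL hLU hθ hC hα ψ hmono hψU hineq
end

section
/- Let 0 < L ≤ U with θ = U/L, C > 0, and α = 1 + ln θ. Define ψ(p) = (C/α)·(1 + ln(p/L)) for p ∈ [L, U]. Then ψ is non-decreasing, ψ(L) = C/α, ψ(U) = C, and p·ψ(p) − ∫_L^p ψ(u) du = p·C/α for all p ∈ [L, U]. -/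
/-!
Write `ψ p = c (1 + log (p / L))` with `c = C / α`. Since `u ↦ u log (u / L)` is an antiderivative of
`1 + log (u / L)` vanishing at `L`, the integral of `ψ` over `[L, p]` is `c p log (p / L)`, which
cancels the logarithmic part of `p ψ p` and leaves `c p`. Finally `ψ U = C` because
`1 + log (U / L) = α`.
-/

open Real Set

lemma hasDerivAt_mul_log_div {L x : ℝ} (hL : L ≠ 0) (hx : x ≠ 0) :
    HasDerivAt (fun u => u * log (u / L)) (1 + log (x / L)) x := by
  have hlog := ((hasDerivAt_id' x).div_const L).log (div_ne_zero hx hL)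
  refine ((hasDerivAt_id' x).fun_mul hlog).congr_deriv ?_
  field_simp
  ring

lemma integral_one_add_log_div {L p : ℝ} (hL : 0 < L) (hp : 0 < p) :
    ∫ u in L..p, (1 + log (u / L)) = p * log (p / L) := by
  have hpos : ∀ x ∈ uIcc L p, 0 < x := fun x hx =>
    lt_of_lt_of_le (lt_min hL hp) hx.1
  have hcont : ContinuousOn (fun u => 1 + log (u / L)) (uIcc L p) :=
    continuousOn_const.add <| (continuousOn_id.div_const L).log fun x hx =>
      (div_pos (hpos x hx) hL).ne'
  rw [intervalIntegral.integral_eq_sub_of_hasDerivAt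
    (fun x hx => hasDerivAt_mul_log_div hL.ne' (hpos x hx).ne') hcont.intervalIntegrable]
  simp [div_self hL.ne']

lemma mul_sub_integral_const_mul_one_add_log_div (c : ℝ) {L p : ℝ} (hL : 0 < L) (hp : 0 < p) :
    p * (c * (1 + log (p / L))) - ∫ u in L..p, c * (1 + log (u / L)) = p * c := by
  rw [intervalIntegral.integral_const_mul, integral_one_add_log_div hL hp]
  ring

lemma monotoneOn_const_mul_one_add_log_div {c L : ℝ} (hc : 0 ≤ c) (hL : 0 < L) :
    MonotoneOn (fun p => c * (1 + log (p / L))) (Ioi 0) := fun _ hx _ _ hxy =>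
  mul_le_mul_of_nonneg_left
    (add_le_add_right (log_le_log (div_pos hx hL) (div_le_div_of_nonneg_right hxy hL.le)) 1) hc

theorem got_optimal_utilization (L U C θ α : ℝ) (hL : 0 < L) (hLU : L ≤ U)
    (hθ : θ = U / L) (hC : 0 < C) (hα : α = 1 + Real.log θ)
    (ψ : ℝ → ℝ) (hψ : ∀ p : ℝ, ψ p = (C / α) * (1 + Real.log (p / L))) :
    MonotoneOn ψ (Set.Icc L U) ∧ ψ L = C / α ∧ ψ U = C ∧
      ∀ p ∈ Set.Icc L U, p * ψ p - (∫ u in L..p, ψ u) = p * C / α := by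
  have hα0 : 0 < α := by
    rw [hα, hθ]
    linarith [log_nonneg ((one_le_div hL).mpr hLU)]
  obtain rfl : ψ = fun p => C / α * (1 + log (p / L)) := funext hψ
  have hpos : ∀ p ∈ Icc L U, 0 < p := fun p hp => hL.trans_le hp.1
  refine ⟨(monotoneOn_const_mul_one_add_log_div (div_pos hC hα0).le hL).mono hpos, ?_, ?_,
    fun p hp => ?_⟩
  · simp [div_self hL.ne']
  · simp only [← hθ, ← hα, div_mul_cancel₀ C hα0.ne']
  · rw [mul_div_assoc]
    exact mul_sub_integral_const_mul_one_add_log_div _ hL (hpos p hp)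
end

section
/- For every θ > 1, the equation α − 1 − 1/(α − 1) = ln((α·θ − 1)/(α − 1)) has a unique solution α in (2, ∞), and this solution satisfies 1 + ln θ < α < 2 + ln θ. -/
/-!
Write `g(α)` for the left-hand side minus the right-hand side. On `[2, ∞)` the function
`α - log (αθ - 1)` is strictly increasing (because `log x < x - 1`), and so are `log (α - 1)` and
`-1/(α - 1)`; hence `g` is strictly increasing there and has at most one zero. With `L = log θ`
one computes `g 2 = -log (2θ - 1) < 0`, `g (1 + L) < 0` (as `((1 + L)θ - 1)/L > θ`), and
`g (2 + L) > 0`, which after exponentiating is `2 + L - e^{-L} < (1 + L) e^{L/(1+L)}` and follows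
from `e^x ≥ 1 + x`. The intermediate value theorem and monotonicity then give the root and
its bounds.
-/

open Real Set

noncomputable def crResidual (θ α : ℝ) : ℝ :=
  α - 1 - 1 / (α - 1) - log ((α * θ - 1) / (α - 1))

theorem strictMonoOn_sub_log_mul_sub_one {θ : ℝ} (hθ : 0 < θ) :
    StrictMonoOn (fun x => x - log (x * θ - 1)) (Ici (1 + θ⁻¹)) := by
  intro a ha b _ hab
  have hθa : θ ≤ a * θ - 1 := by
    have := mul_le_mul_of_nonneg_right (mem_Ici.1 ha) hθ.le
    rw [add_mul, inv_mul_cancel₀ hθ.ne'] at this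
    linarith
  have hpos : 0 < a * θ - 1 := by linarith
  have hratio_pos : 0 < (b * θ - 1) / (a * θ - 1) :=
    div_pos (by nlinarith) hpos
  have hratio_ne : (b * θ - 1) / (a * θ - 1) ≠ 1 := by
    rw [Ne, div_eq_one_iff_eq hpos.ne']
    nlinarith
  have key : log (b * θ - 1) - log (a * θ - 1) < b - a :=
    calc log (b * θ - 1) - log (a * θ - 1) = log ((b * θ - 1) / (a * θ - 1)) :=
          (log_div (by nlinarith) hpos.ne').symm
      _ < (b * θ - 1) / (a * θ - 1) - 1 := log_lt_sub_one_of_pos hratio_pos hratio_ne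
      _ = (b - a) * θ / (a * θ - 1) := by rw [div_sub_one hpos.ne']; ring
      _ ≤ b - a := div_le_of_le_mul₀ hpos.le (by nlinarith) (by nlinarith)
  simp only
  linarith

theorem crResidual_eq {θ α : ℝ} (hθ : 1 ≤ θ) (hα : 1 < α) :
    crResidual θ α = (α - log (α * θ - 1)) + log (α - 1) - 1 / (α - 1) - 1 := by
  rw [crResidual, log_div (by nlinarith) (by linarith)]
  ring

theorem strictMonoOn_crResidual {θ : ℝ} (hθ : 1 ≤ θ) : StrictMonoOn (crResidual θ) (Ici 2) := by
  intro a ha b hb hab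
  have ha : (2 : ℝ) ≤ a := ha
  have hb : (2 : ℝ) ≤ b := hb
  have hsub : Ici (2 : ℝ) ⊆ Ici (1 + θ⁻¹) :=
    Ici_subset_Ici.2 (by linarith [inv_le_one_of_one_le₀ hθ])
  have h₁ := strictMonoOn_sub_log_mul_sub_one (by linarith) (hsub ha) (hsub hb) hab
  have h₂ : log (a - 1) ≤ log (b - 1) := log_le_log (by linarith) (by linarith)
  have h₃ : 1 / (b - 1) ≤ 1 / (a - 1) := one_div_le_one_div_of_le (by linarith) (by linarith)
  simp only at h₁
  rw [crResidual_eq hθ (by linarith), crResidual_eq hθ (by linarith)]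
  linarith

theorem continuousOn_crResidual {θ : ℝ} (hθ : 1 ≤ θ) : ContinuousOn (crResidual θ) (Ioi 1) := by
  intro x hx
  have hx : 1 < x := hx
  have h₁ : x - 1 ≠ 0 := by linarith
  have h₂ : (x * θ - 1) / (x - 1) ≠ 0 := div_ne_zero (by nlinarith) h₁
  unfold crResidual
  fun_prop (disch := assumption)

theorem crResidual_two (θ : ℝ) : crResidual θ 2 = -log (2 * θ - 1) := by
  norm_num [crResidual]

theorem crResidual_one_add_log_neg {θ : ℝ} (hθ : 1 < θ) : crResidual θ (1 + log θ) < 0 := by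
  have hL : 0 < log θ := log_pos hθ
  have hratio : θ < ((1 + log θ) * θ - 1) / log θ := by
    rw [lt_div_iff₀ hL]
    linarith
  have hlog : log θ < log (((1 + log θ) * θ - 1) / log θ) := log_lt_log (by linarith) hratio
  have hinv : 0 < 1 / log θ := by positivity
  rw [crResidual, add_sub_cancel_left]
  linarith

theorem two_add_sub_exp_neg_lt {L : ℝ} (hL : 0 < L) :
    2 + L - exp (-L) < (1 + L) * exp (L / (1 + L)) :=
  calc 2 + L - exp (-L) < 1 + 2 * L := by linarith [add_one_lt_exp (neg_ne_zero.2 hL.ne')]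
    _ = (1 + L) * (L / (1 + L) + 1) := by field_simp; ring
    _ ≤ (1 + L) * exp (L / (1 + L)) := by gcongr; exact add_one_le_exp _

theorem crResidual_two_add_log_pos {θ : ℝ} (hθ : 1 < θ) : 0 < crResidual θ (2 + log θ) := by
  set L := log θ
  have hL : 0 < L := log_pos hθ
  have hθL : θ = exp L := (exp_log (by linarith)).symm
  have hsub : 2 + L - 1 = 1 + L := by ring
  have hexp : L + L / (1 + L) = 1 + L - 1 / (1 + L) := by field_simp; ring
  have hlt : ((2 + L) * θ - 1) / (1 + L) < exp (L + L / (1 + L)) := by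
    have h := mul_lt_mul_of_pos_right (two_add_sub_exp_neg_lt hL) (exp_pos L)
    rw [sub_mul, exp_neg, inv_mul_cancel₀ (exp_pos L).ne'] at h
    rw [div_lt_iff₀ (by linarith), exp_add, hθL]
    linarith
  rw [hexp, ← log_lt_iff_lt_exp (div_pos (by nlinarith) (by linarith))] at hlt
  rw [crResidual, hsub]
  linarith

theorem fomkp_separable_cr_equation (θ : ℝ) (hθ : 1 < θ) :
    (∃! α : ℝ, 2 < α ∧ α - 1 - 1 / (α - 1) = Real.log ((α * θ - 1) / (α - 1))) ∧
    ∀ α : ℝ, 2 < α → α - 1 - 1 / (α - 1) = Real.log ((α * θ - 1) / (α - 1)) →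
      1 + Real.log θ < α ∧ α < 2 + Real.log θ := by
  have hL : 0 < log θ := log_pos hθ
  have hmono := strictMonoOn_crResidual hθ.le
  have hroot : ∀ α, α - 1 - 1 / (α - 1) = log ((α * θ - 1) / (α - 1)) ↔ crResidual θ α = 0 :=
    fun α => sub_eq_zero.symm
  have hcont : ContinuousOn (crResidual θ) (Icc 2 (2 + log θ)) :=
    (continuousOn_crResidual hθ.le).mono fun x hx => by simp only [mem_Ioi]; linarith [hx.1]
  obtain ⟨c, ⟨hc2, -⟩, hc⟩ := intermediate_value_Ioo (by linarith) hcont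
    ⟨(crResidual_two θ).trans_lt (neg_neg_of_pos (log_pos (by linarith))),
      crResidual_two_add_log_pos hθ⟩
  refine ⟨⟨c, ⟨hc2, (hroot c).2 hc⟩, fun β hβ => hmono.injOn (le_of_lt hβ.1) hc2.le
    (((hroot β).1 hβ.2).trans hc.symm)⟩, fun α hα heq => ?_⟩
  have hα0 := (hroot α).1 heq
  constructor
  · rcases lt_or_ge (1 + log θ) 2 with h | h
    · linarith
    · exact (hmono.lt_iff_lt h hα.le).1 (hα0 ▸ crResidual_one_add_log_neg hθ)
  · exact (hmono.lt_iff_lt hα.le (show (2 : ℝ) ≤ 2 + log θ by linarith)).1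
      (hα0 ▸ crResidual_two_add_log_pos hθ)
end

section
/- Let 0 < L ≤ U, θ = U/L, C > 0, and let α > 2 satisfy α − 1 − 1/(α − 1) = ln θ. Set β = C/(α − 1) and define φ(w) = L on [0, β) and φ(w) = L·exp(α·w/C − α/(α − 1)) on [β, C]. Then φ is non-decreasing, φ(β) = L, φ(C) = U, and for every w ∈ [β, C], φ(w)·C = α·∫₀^w φ(u) du − L·β. -/
/-!
Writing `k = α / C`, the threshold is `φ w = L * exp (k * max (w - β) 0)`: constant on `[0, β]`
and a pure exponential with rate `k` beyond `β`. Hence `C φ' = α φ` on `[β, C]`, so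
`C φ - α ∫₀ φ` is constant there; at `w = β` it equals `C L - α L β = -L β` because
`(α - 1) β = C`. At `w = C` the exponent is `α - α / (α - 1) = log θ`, which gives `φ C = U`.
-/

open Real intervalIntegral

noncomputable section

def thresholdFn (L k β w : ℝ) : ℝ :=
  if w < β then L else L * exp (k * (w - β))

section thresholdFn

variable {L k β w : ℝ}

theorem thresholdFn_of_le (h : w ≤ β) : thresholdFn L k β w = L := by
  rcases h.lt_or_eq with h | rfl
  · simp [thresholdFn, h]
  · simp [thresholdFn]

theorem thresholdFn_of_ge (h : β ≤ w) : thresholdFn L k β w = L * exp (k * (w - β)) := by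
  simp [thresholdFn, not_lt.2 h]

theorem thresholdFn_eq_mul_exp_max :
    thresholdFn L k β = fun w => L * exp (k * max (w - β) 0) := by
  funext w
  rcases le_total w β with h | h
  · rw [thresholdFn_of_le h, max_eq_right (sub_nonpos.2 h), mul_zero, exp_zero, mul_one]
  · rw [thresholdFn_of_ge h, max_eq_left (sub_nonneg.2 h)]

theorem continuous_thresholdFn : Continuous (thresholdFn L k β) := by
  rw [thresholdFn_eq_mul_exp_max]
  fun_prop

theorem monotone_thresholdFn (hL : 0 ≤ L) (hk : 0 ≤ k) : Monotone (thresholdFn L k β) := by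
  rw [thresholdFn_eq_mul_exp_max]
  intro a b hab
  dsimp only
  gcongr

theorem mul_integral_exp_mul_sub (k β w : ℝ) :
    k * ∫ u in β..w, exp (k * (u - β)) = exp (k * (w - β)) - 1 := by
  rw [integral_comp_sub_right (fun u => exp (k * u)), mul_integral_comp_mul_left, integral_exp,
    sub_self, mul_zero, exp_zero]

theorem mul_integral_thresholdFn (hβ : 0 ≤ β) (hw : β ≤ w) :
    k * ∫ u in (0:ℝ)..w, thresholdFn L k β u = k * L * β + thresholdFn L k β w - L := by
  have hflat : ∫ u in (0:ℝ)..β, thresholdFn L k β u = β * L := by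
    rw [integral_congr (g := fun _ => L) fun u hu => thresholdFn_of_le (Set.uIcc_of_le hβ ▸ hu).2,
      integral_const, smul_eq_mul, sub_zero]
  have hrise : ∫ u in β..w, thresholdFn L k β u = L * ∫ u in β..w, exp (k * (u - β)) := by
    rw [← integral_const_mul]
    exact integral_congr fun u hu => thresholdFn_of_ge (Set.uIcc_of_le hw ▸ hu).1
  rw [← integral_add_adjacent_intervals (continuous_thresholdFn.intervalIntegrable _ _)
      (continuous_thresholdFn.intervalIntegrable _ _), mul_add, hflat, hrise, mul_left_comm k L,
    mul_integral_exp_mul_sub, thresholdFn_of_ge hw]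
  ring

end thresholdFn

theorem fomkp_aggregate_threshold (L U C θ α β : ℝ) (hL : 0 < L) (hLU : L ≤ U)
    (hθ : θ = U / L) (hC : 0 < C) (hα : 2 < α)
    (heq : α - 1 - 1 / (α - 1) = Real.log θ)
    (hβ : β = C / (α - 1))
    (φ : ℝ → ℝ)
    (hφ : ∀ w : ℝ, φ w = if w < β then L
        else L * Real.exp (α * w / C - α / (α - 1))) :
    MonotoneOn φ (Set.Icc 0 C) ∧ φ β = L ∧ φ C = U ∧
      ∀ w ∈ Set.Icc β C, φ w * C = α * (∫ u in (0:ℝ)..w, φ u) - L * β := by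
  have hα1 : 0 < α - 1 := by linarith
  have hβ0 : 0 ≤ β := by rw [hβ]; positivity
  have hCβ : C = (α - 1) * β := by rw [hβ]; field_simp
  have hφ_eq : φ = thresholdFn L (α / C) β := by
    funext w
    rw [hφ, thresholdFn, hβ]
    congr 3
    field_simp
  subst hφ_eq
  refine ⟨(monotone_thresholdFn hL.le (div_nonneg (by linarith) hC.le)).monotoneOn _,
    thresholdFn_of_le le_rfl, ?_, ?_⟩
  · have hβC : β ≤ C := by rw [hCβ]; nlinarith
    have hexponent : α / C * (C - β) = log θ := by rw [← heq, hβ]; field_simp; ring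
    rw [thresholdFn_of_ge hβC, hexponent, exp_log (hθ ▸ div_pos (hL.trans_le hLU) hL), hθ]
    field_simp
  · rintro w ⟨hβw, -⟩
    have hintegral := mul_integral_thresholdFn (L := L) (k := α / C) hβ0 hβw
    field_simp at hintegral
    linear_combination L * hCβ - hintegral
end
end

section
/- Let 0 < L < U, C > 0, and let α > 1 satisfy α = ln((U − L)/(α·L − L)). Define φ(w) = L + (U − L)·exp(α·w/C − α) for w ∈ [0, C]. Then φ is non-decreasing, φ(C) = U, φ(0) = L + (U−L)e^{−α} ≥ L, and for every w ∈ [0, C], φ(w)·C ≤ α·∫₀^w φ(u) du + α·(C − w)·L, with equality for all w ∈ [0, C]. -/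
/-!
The threshold satisfies `φ' = (α / C) (φ - L)`, so `α L t + C φ t` is a primitive of `α φ` and
`α ∫₀^w φ = α L w + C (φ w - φ 0)`. The claimed identity thus reduces to `φ 0 = α L`, which is
exactly the defining equation of `α` after exponentiating.
-/

open Real

noncomputable def expThreshold (L U C α : ℝ) (w : ℝ) : ℝ :=
  L + (U - L) * exp (α * w / C - α)

namespace expThreshold

variable {L U C α : ℝ}

theorem monotone (hLU : L ≤ U) (hα : 0 ≤ α) (hC : 0 ≤ C) : Monotone (expThreshold L U C α) := by
  intro a b hab
  unfold expThreshold
  gcongr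

theorem apply_self (hC : C ≠ 0) : expThreshold L U C α C = U := by
  simp [expThreshold, mul_div_assoc, div_self hC]

theorem apply_zero : expThreshold L U C α 0 = L + (U - L) * exp (-α) := by
  simp [expThreshold]

theorem continuous : Continuous (expThreshold L U C α) := by
  unfold expThreshold
  fun_prop

theorem hasDerivAt_primitive (hC : C ≠ 0) (w : ℝ) :
    HasDerivAt (fun t => α * L * t + C * expThreshold L U C α t)
      (α * expThreshold L U C α w) w := by
  have hinner : HasDerivAt (fun t : ℝ => α * t / C - α) (α / C) w := by
    simpa using (((hasDerivAt_id w).const_mul α).div_const C).sub_const α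
  have h := ((hasDerivAt_id w).const_mul (α * L)).add
    (((hinner.exp.const_mul (U - L)).const_add L).const_mul C)
  unfold expThreshold
  refine h.congr_deriv ?_
  field_simp

theorem mul_integral (hC : C ≠ 0) (w : ℝ) :
    α * ∫ u in (0:ℝ)..w, expThreshold L U C α u =
      α * L * w + C * (expThreshold L U C α w - expThreshold L U C α 0) := by
  rw [← intervalIntegral.integral_const_mul,
    intervalIntegral.integral_eq_sub_of_hasDerivAt (fun u _ => hasDerivAt_primitive hC u)]
  · ring
  · exact (continuous.const_mul α).intervalIntegrable 0 w

theorem apply_zero_eq_of_eq_log (hL : 0 < L) (hU : L < U) (hα : 1 < α)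
    (heq : α = log ((U - L) / (α * L - L))) : expThreshold L U C α 0 = α * L := by
  have hUL : 0 < U - L := by linarith
  have hαL : 0 < α * L - L := by nlinarith
  have hpos : 0 < (U - L) / (α * L - L) := div_pos hUL hαL
  have hexp : exp α = (U - L) / (α * L - L) := by
    conv_lhs => rw [heq]
    exact exp_log hpos
  rw [apply_zero, exp_neg, hexp, inv_div, mul_div_cancel₀ _ hUL.ne']
  ring

end expThreshold

theorem variant1_threshold (L U C α : ℝ) (hL : 0 < L) (hU : L < U) (hC : 0 < C)
    (hα : 1 < α) (heq : α = Real.log ((U - L) / (α * L - L)))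
    (φ : ℝ → ℝ)
    (hφ : ∀ w : ℝ, φ w = L + (U - L) * Real.exp (α * w / C - α)) :
    MonotoneOn φ (Set.Icc 0 C) ∧ φ C = U ∧
      (φ 0 = L + (U - L) * Real.exp (-α) ∧ L ≤ φ 0) ∧
      ∀ w ∈ Set.Icc (0:ℝ) C,
        φ w * C ≤ α * (∫ u in (0:ℝ)..w, φ u) + α * (C - w) * L ∧
        φ w * C = α * (∫ u in (0:ℝ)..w, φ u) + α * (C - w) * L := by
  obtain rfl : φ = expThreshold L U C α := funext hφ
  have hstart := expThreshold.apply_zero_eq_of_eq_log (C := C) hL hU hα heq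
  have hidentity (w : ℝ) :
      expThreshold L U C α w * C =
        α * (∫ u in (0:ℝ)..w, expThreshold L U C α u) + α * (C - w) * L := by
    rw [expThreshold.mul_integral hC.ne', hstart]
    ring
  refine ⟨(expThreshold.monotone hU.le (by linarith) hC.le).monotoneOn _,
    expThreshold.apply_self hC.ne', ⟨expThreshold.apply_zero, ?_⟩,
    fun w _ => ⟨(hidentity w).le, hidentity w⟩⟩
  rw [hstart]
  nlinarith
end

section
/- Let 0 < L < U, C > 0, and α > 1. Suppose ψ: [L, U] → [0, C] is non-decreasing, ψ(U) ≤ C, and p·ψ(p) − ∫_L^p ψ(u) du + (C − ψ(p))·L ≥ p·C/α for all p ∈ [L, U]. Then C ≥ (C/α)·ln((U − L)/(α·L − L)) whenever α·L > L, which implies α ≥ α*, where α* is the unique solution of α* = ln((U − L)/(α*·L − L)). -/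
/-!
Write `Φ(x) = ∫_L^x ψ`. The competitiveness constraint says `(x - L) ψ(x) - Φ(x) ≥ (C/α)(x - αL)`,
and the left side is `(x - L)²` times the derivative of the average `Φ(x)/(x - L)`. Integrating
from `αL` to `U` and using `Φ(αL) ≥ 0` together with the constraint at `U` and `ψ(U) ≤ C` leaves
exactly `(C/α) log((U - L)/(αL - L)) ≤ C`. Since `ψ` is only monotone, `Φ` is differentiable
merely from the right, with derivative the right limit of `ψ`, which still dominates `ψ`; a
one-sided fencing argument replaces the integration. The bound on `α*` follows because
`β ↦ log((U - L)/(βL - L))` is decreasing.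
-/

open Set MeasureTheory Function

theorem Monotone.ae_eq_rightLim {f : ℝ → ℝ} (hf : Monotone f) : f =ᵐ[volume] rightLim f :=
  ae_iff.2 <| measure_mono_null (t := {x | ¬ContinuousAt f x})
    (fun x (hx : ¬f x = rightLim f x) (hcont : ContinuousAt f x) =>
      hx (hf.continuousWithinAt_Ioi_iff_rightLim_eq.1 hcont.continuousWithinAt).symm)
    (hf.countable_not_continuousAt.measure_zero volume)

theorem Monotone.hasDerivWithinAt_Ici_integral {f : ℝ → ℝ} (hf : Monotone f) (a x : ℝ) :
    HasDerivWithinAt (fun y => ∫ u in a..y, f u) (rightLim f x) (Ici x) x := by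
  have hprim : (fun y => ∫ u in a..y, f u) = fun y => ∫ u in a..y, hf.stieltjesFunction u :=
    funext fun y => intervalIntegral.integral_congr_ae <|
      hf.ae_eq_rightLim.mono fun u hu _ => hu
  rw [hprim]
  exact intervalIntegral.integral_hasDerivWithinAt_right
    hf.stieltjesFunction.mono.intervalIntegrable
    hf.stieltjesFunction.mono.measurable.stronglyMeasurable.stronglyMeasurableAtFilter
    ((hf.stieltjesFunction.right_continuous x).mono Ioi_subset_Ici_self)

theorem le_div_sub_div_of_hasDerivWithinAt_Ici {Φ φ : ℝ → ℝ} {L a b c : ℝ} (hLa : L < a)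
    (hab : a ≤ b) (hΦ : ContinuousOn Φ (Icc a b))
    (hΦ' : ∀ x ∈ Ico a b, HasDerivWithinAt Φ (φ x) (Ici x) x)
    (hφ : ∀ x ∈ Ico a b, c * (x - a) ≤ (x - L) * φ x - Φ x) :
    c * (Real.log (b - L) + (a - L) / (b - L) - (Real.log (a - L) + 1)) ≤
      Φ b / (b - L) - Φ a / (a - L) := by
  have hpos : ∀ x ∈ Icc a b, x - L ≠ 0 := fun x hx => by linarith [hx.1]
  -- `G` agrees with `Φ x / (x - L)` at `a` and grows at the rate that `hφ` guarantees for it.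
  set G : ℝ → ℝ := fun x => Φ a / (a - L) + c * (Real.log (x - L) + (a - L) / (x - L) -
    (Real.log (a - L) + 1)) with hG
  have hG' : ∀ x ∈ Icc a b, HasDerivAt G (c * (x - a) / (x - L) ^ 2) x := by
    intro x hx
    have hsub : HasDerivAt (fun y => y - L) 1 x := (hasDerivAt_id' x).sub_const L
    refine ((((hsub.log (hpos x hx)).add ((hasDerivAt_const x (a - L)).div hsub
      (hpos x hx))).sub_const _).const_mul c |>.const_add _).congr_deriv ?_
    field_simp
    ring
  have hA' : ∀ x ∈ Ico a b, HasDerivWithinAt (fun x => Φ x / (x - L))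
      (((x - L) * φ x - Φ x) / (x - L) ^ 2) (Ici x) x := by
    intro x hx
    refine ((hΦ' x hx).div ((hasDerivAt_id' x).sub_const L).hasDerivWithinAt
      (hpos x (Ico_subset_Icc_self hx))).congr_deriv ?_
    ring
  have hfence := image_le_of_deriv_right_le_deriv_boundary (B := fun x => Φ x / (x - L))
    (fun x hx => (hG' x hx).continuousAt.continuousWithinAt)
    (fun x hx => (hG' x (Ico_subset_Icc_self hx)).hasDerivWithinAt)
    (by simp [hG, div_self (hpos a (left_mem_Icc.2 hab))])
    (hΦ.div (continuousOn_id.sub continuousOn_const) hpos) hA'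
    (fun x hx => div_le_div_of_nonneg_right (hφ x hx) (sq_nonneg _))
    (right_mem_Icc.2 hab)
  simp only [hG] at hfence
  linarith

theorem Monotone.mul_log_div_le {f : ℝ → ℝ} {L a b c C : ℝ} (hf : Monotone f) (hLa : L < a)
    (hab : a ≤ b) (hfL : 0 ≤ f L) (hfb : f b ≤ C)
    (hineq : ∀ x ∈ Icc a b, c * (x - a) ≤ (x - L) * f x - ∫ u in L..x, f u) :
    c * Real.log ((b - L) / (a - L)) ≤ C := by
  have hbL : 0 < b - L := by linarith
  have hgrowth := le_div_sub_div_of_hasDerivWithinAt_Ici hLa hab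
    (intervalIntegral.continuous_primitive (fun _ _ => hf.intervalIntegrable) L).continuousOn
    (fun x _ => hf.hasDerivWithinAt_Ici_integral L x)
    (fun x hx => (hineq x (Ico_subset_Icc_self hx)).trans <| by
      have : 0 ≤ x - L := by linarith [hx.1]
      gcongr
      exact hf.le_rightLim le_rfl)
  have hΦa : 0 ≤ ∫ u in L..a, f u :=
    intervalIntegral.integral_nonneg hLa.le fun u hu => hfL.trans (hf hu.1)
  have hΦb : (∫ u in L..b, f u) ≤ (b - L) * C - c * (b - a) := by
    have hb := hineq b (right_mem_Icc.2 hab)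
    have hfbC : (b - L) * f b ≤ (b - L) * C := by gcongr
    linarith
  rw [Real.log_div hbL.ne' (by linarith)]
  calc c * (Real.log (b - L) - Real.log (a - L))
      = c * (Real.log (b - L) + (a - L) / (b - L) - (Real.log (a - L) + 1))
        + c * (b - a) / (b - L) := by field_simp; ring
    _ ≤ (∫ u in L..b, f u) / (b - L) + c * (b - a) / (b - L) := by
        have := div_nonneg hΦa (by linarith : (0:ℝ) ≤ a - L)
        linarith
    _ ≤ C := by
        rw [← add_div, div_le_iff₀ hbL]
        linarith

theorem le_of_log_div_le {L U α β : ℝ} (hL : 0 < L) (hU : L < U) (hα : 1 < α)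
    (hlog : Real.log ((U - L) / (α * L - L)) ≤ α) (hβ : β = Real.log ((U - L) / (β * L - L))) :
    β ≤ α := by
  by_contra! hαβ
  have hαL : 0 < α * L - L := by nlinarith
  have : Real.log ((U - L) / (β * L - L)) < Real.log ((U - L) / (α * L - L)) :=
    Real.log_lt_log (div_pos (by linarith) (by nlinarith))
      (div_lt_div_of_pos_left (by linarith) hαL (by nlinarith))
  linarith

theorem variant1_lower_bound (L U C α : ℝ) (hL : 0 < L) (hU : L < U) (hC : 0 < C)
    (hα : 1 < α)
    (ψ : ℝ → ℝ) (hmono : MonotoneOn ψ (Set.Icc L U))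
    (hrange : ∀ p ∈ Set.Icc L U, ψ p ∈ Set.Icc 0 C)
    (hψU : ψ U ≤ C)
    (hineq : ∀ p ∈ Set.Icc L U,
      p * ψ p - (∫ u in L..p, ψ u) + (C - ψ p) * L ≥ p * C / α) :
    (α * L > L → C ≥ (C / α) * Real.log ((U - L) / (α * L - L))) ∧
    ∀ αstar : ℝ, 1 < αstar → αstar = Real.log ((U - L) / (αstar * L - L)) →
      α ≥ αstar := by
  obtain ⟨f, hf, hψf⟩ := hmono.exists_monotone_extension
    ⟨0, by rintro _ ⟨x, hx, rfl⟩; exact (hrange x hx).1⟩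
    ⟨C, by rintro _ ⟨x, hx, rfl⟩; exact (hrange x hx).2⟩
  have hCα : 0 < C / α := div_pos hC (by linarith)
  have hbound : C / α * Real.log ((U - L) / (α * L - L)) ≤ C := by
    rcases le_or_gt U (α * L) with hUa | haU
    · refine le_trans (mul_nonpos_of_nonneg_of_nonpos hCα.le (Real.log_nonpos ?_ ?_)) hC.le
      · exact div_nonneg (by linarith) (by nlinarith)
      · exact div_le_one_of_le₀ (by linarith) (by nlinarith)
    have hLU := hU.le
    refine hf.mul_log_div_le (by nlinarith) haU.le
      (hψf (left_mem_Icc.2 hLU) ▸ (hrange L (left_mem_Icc.2 hLU)).1)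
      (hψf (right_mem_Icc.2 hLU) ▸ hψU) fun x hx => ?_
    have hxI : x ∈ Icc L U := ⟨by nlinarith [hx.1], hx.2⟩
    have hint : ∫ u in L..x, ψ u = ∫ u in L..x, f u := intervalIntegral.integral_congr
      fun u hu => hψf (uIcc_subset_Icc (left_mem_Icc.2 hLU) hxI hu)
    have hc : C / α * (x - α * L) = x * C / α - C * L := by field_simp
    rw [← hψf hxI, ← hint]
    linarith [hineq x hxI]
  refine ⟨fun _ => hbound, fun αstar _ hstar => le_of_log_div_le hL hU hα ?_ hstar⟩
  exact le_of_mul_le_mul_left (hbound.trans_eq (by field_simp)) hCα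
end

section
/- Let C > 0, L > 0, c ≥ 1, θ > 1 with c·θ > 1, and set β = (W(c·θ·ln(c·θ)/e) − ln(c·θ) + 1)·C where W is the Lambert W function. Assume 0 ≤ β ≤ C. Define φ(w) = (L/c)·(e^{w/C} − 1)/(e^{β/C} − 1) for w ∈ [0, β) and φ(w) = (L/c)·exp((w − β)·ln(c·θ)/(C − β)) for w ∈ [β, C]. Then φ is continuous at β with φ(β) = L/c, φ(0) = 0, φ(C) = (L/c)·c·θ = L·θ, and φ is non-decreasing on [0, C]. -/
/-!
Put `t = log (cθ)`. If `W e^W = cθ t / e`, then `W` can be neither `t` (that would force `e = 1`)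
nor `t - 1` (that would force `cθ = 0`), so `0 < β < C` and both pieces of `φ` are well defined.
The exponential piece is `L/c` at `β`, and the normalised piece `(e^{w/C} - 1)/(e^{β/C} - 1)` tends
to `1` there, which gives continuity; each piece is increasing, the first stays below `L/c` and the
second above it, which gives monotonicity.
-/

open Real

theorem Monotone.ite_lt {α β : Type*} [LinearOrder α] [Preorder β] {f g : α → β} {c : α}
    (hf : Monotone f) (hg : Monotone g) (hfg : ∀ x y, x < c → c ≤ y → f x ≤ g y) :
    Monotone fun x => if x < c then f x else g x := by
  intro x y hxy
  by_cases hx : x < c <;> by_cases hy : y < c <;> simp only [hx, hy, if_true, if_false]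
  · exact hf hxy
  · exact hfg x y hx (not_lt.1 hy)
  · exact absurd (hxy.trans_lt hy) hx
  · exact hg hxy

theorem ne_log_of_mul_exp_eq {x W : ℝ} (hx : 1 < x) (hW : W * exp W = x * log x / exp 1) :
    W ≠ log x := by
  rintro rfl
  rw [exp_log (by linarith), eq_div_iff (exp_pos 1).ne'] at hW
  have hlog : 0 < log x * x := mul_pos (log_pos hx) (by linarith)
  exact one_ne_zero ((exp_eq_one_iff _).1 (by nlinarith))

theorem ne_log_sub_one_of_mul_exp_eq {x W : ℝ} (hx : 0 < x)
    (hW : W * exp W = x * log x / exp 1) : W ≠ log x - 1 := by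
  rintro rfl
  rw [exp_sub, exp_log hx] at hW
  field_simp at hW
  linarith

noncomputable def threshold (a k β C w : ℝ) : ℝ :=
  if w < β then a * (exp (w / C) - 1) / (exp (β / C) - 1)
  else a * exp ((w - β) * k / (C - β))

section threshold

variable {a k β C : ℝ}

theorem threshold_self : threshold a k β C β = a := by
  simp [threshold]

theorem threshold_zero (hβ : 0 < β) : threshold a k β C 0 = 0 := by
  simp [threshold, hβ]

theorem threshold_of_lt (hβC : β < C) : threshold a k β C C = a * exp k := by
  rw [threshold, if_neg (not_lt.2 hβC.le), mul_div_cancel_left₀ k (sub_ne_zero.2 hβC.ne')]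

theorem continuous_threshold (hβ : β ≠ 0) (hC : C ≠ 0) : Continuous (threshold a k β C) := by
  have hD : exp (β / C) - 1 ≠ 0 := sub_ne_zero.2 (mt (exp_eq_one_iff _).1 (div_ne_zero hβ hC))
  refine Continuous.if (fun w hw => ?_) (by fun_prop) (by fun_prop)
  rw [show {x | x < β} = Set.Iio β from rfl, frontier_Iio, Set.mem_singleton_iff] at hw
  subst hw
  simp [mul_div_assoc, div_self hD]

theorem monotone_threshold (ha : 0 ≤ a) (hk : 0 ≤ k) (hβ : 0 < β) (hβC : β ≤ C) :
    Monotone (threshold a k β C) := by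
  have hC : 0 < C := hβ.trans_le hβC
  have hD : 0 < exp (β / C) - 1 := sub_pos.2 (one_lt_exp_iff.2 (div_pos hβ hC))
  refine Monotone.ite_lt ?_ ?_ fun x y hx hy => ?_
  · intro x y hxy
    have : exp (x / C) ≤ exp (y / C) := exp_le_exp.2 (by gcongr)
    dsimp only
    gcongr
  · intro x y hxy
    have : 0 ≤ k / (C - β) := div_nonneg hk (sub_nonneg.2 hβC)
    simp only [mul_div_assoc]
    gcongr
  · have below : a * (exp (x / C) - 1) / (exp (β / C) - 1) ≤ a := by
      rw [div_le_iff₀ hD]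
      have : exp (x / C) ≤ exp (β / C) := exp_le_exp.2 (by gcongr)
      nlinarith
    have above : a ≤ a * exp ((y - β) * k / (C - β)) :=
      le_mul_of_one_le_right ha <| one_le_exp <|
        div_nonneg (mul_nonneg (sub_nonneg.2 hy) hk) (sub_nonneg.2 hβC)
    exact below.trans above

end threshold

theorem variant2_threshold_general (C L c θ W β : ℝ) (hC : 0 < C) (hL : 0 < L)
    (hc : 1 ≤ c) (hcθ : 1 < c * θ)
    (hW : W * Real.exp W = c * θ * Real.log (c * θ) / Real.exp 1)
    (hβ : β = (W - Real.log (c * θ) + 1) * C)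
    (hβmem : β ∈ Set.Icc (0:ℝ) C)
    (φ : ℝ → ℝ)
    (hφ : ∀ w : ℝ, φ w = if w < β
        then (L / c) * (Real.exp (w / C) - 1) / (Real.exp (β / C) - 1)
        else (L / c) * Real.exp ((w - β) * Real.log (c * θ) / (C - β))) :
    ContinuousWithinAt φ (Set.Icc 0 C) β ∧ φ β = L / c ∧ φ 0 = 0 ∧
      φ C = L * θ ∧ MonotoneOn φ (Set.Icc 0 C) := by
  have hc0 : 0 < c := one_pos.trans_le hc
  have hβ0 : 0 < β := by
    refine hβmem.1.lt_of_ne fun h => ne_log_sub_one_of_mul_exp_eq (by linarith) hW ?_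
    nlinarith
  have hβC : β < C := by
    refine hβmem.2.lt_of_ne fun h => ne_log_of_mul_exp_eq hcθ hW ?_
    nlinarith
  obtain rfl : φ = threshold (L / c) (log (c * θ)) β C := funext hφ
  refine ⟨(continuous_threshold hβ0.ne' hC.ne').continuousWithinAt, threshold_self,
    threshold_zero hβ0, ?_,
    (monotone_threshold (by positivity) (log_pos hcθ).le hβ0 hβC.le).monotoneOn _⟩
  rw [threshold_of_lt hβC, exp_log (by linarith)]
  field_simp

theorem variant2_threshold (C L c θ W β : ℝ) (hC : 0 < C) (hL : 0 < L)
    (hc : 1 ≤ c) (hθ : 1 < θ) (hcθ : 1 < c * θ)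
    (hW0 : 0 ≤ W)
    (hW : W * Real.exp W = c * θ * Real.log (c * θ) / Real.exp 1)
    (hβ : β = (W - Real.log (c * θ) + 1) * C)
    (hβmem : β ∈ Set.Icc (0:ℝ) C)
    (φ : ℝ → ℝ)
    (hφ : ∀ w : ℝ, φ w = if w < β
        then (L / c) * (Real.exp (w / C) - 1) / (Real.exp (β / C) - 1)
        else (L / c) * Real.exp ((w - β) * Real.log (c * θ) / (C - β))) :
    ContinuousWithinAt φ (Set.Icc 0 C) β ∧ φ β = L / c ∧ φ 0 = 0 ∧
      φ C = L * θ ∧ MonotoneOn φ (Set.Icc 0 C) :=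
  variant2_threshold_general C L c θ W β hC hL hc hcθ hW hβ hβmem φ hφ
end

section
/- Let 0 < L ≤ U, C > 0, α > 0, and suppose ψ: [L, U] → [0, C] is non-decreasing and satisfies p·ψ(p) − ∫_L^p ψ(u) du ≥ p·C/α for all p ∈ [L, U]. Then ψ(p) ≥ (C/α)·(1 + ln(p/L)) for all p ∈ [L, U]. -/
/-!
Write `F p = ∫_L^p ψ` and `G p = F p / p`, so that the hypothesis reads `ψ p ≥ G p + C/α`.
Since `ψ` is non-decreasing, `F z ≥ F x + (z - x) ψ x` for `x < z`, which bounds the right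
slopes of `G` at `x` from below by `(ψ x - G x) / z → (ψ x - G x) / x ≥ (C/α) / x`. Thus the
right Dini derivative of `G` dominates the derivative of `(C/α) log (p/L)`, both vanish at `L`,
and the comparison principle for Dini derivatives gives `G p ≥ (C/α) log (p/L)`; hence
`ψ p ≥ C/α + G p ≥ (C/α) (1 + log (p/L))`.
-/

open Set Filter Topology MeasureTheory

theorem MonotoneOn.mul_le_intervalIntegral {ψ : ℝ → ℝ} {x z : ℝ}
    (hψ : MonotoneOn ψ (Icc x z)) (hxz : x ≤ z) : (z - x) * ψ x ≤ ∫ u in x..z, ψ u := by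
  have hconst : ∫ _ in x..z, ψ x ≤ ∫ u in x..z, ψ u :=
    intervalIntegral.integral_mono_on hxz intervalIntegrable_const
      (hψ.mono (uIcc_of_le hxz).subset).intervalIntegrable
      fun u hu => hψ (left_mem_Icc.2 hxz) hu hu.1
  simpa only [intervalIntegral.integral_const, smul_eq_mul] using hconst

theorem le_slope_div_self {F : ℝ → ℝ} {d x z : ℝ} (hx : 0 < x) (hxz : x < z)
    (hF : F x + (z - x) * d ≤ F z) : (d - F x / x) / z ≤ slope (fun t => F t / t) x z := by
  have hz : 0 < z := hx.trans hxz
  have hzx : 0 < z - x := sub_pos.2 hxz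
  rw [slope_def_field, le_div_iff₀ hzx]
  calc (d - F x / x) / z * (z - x) = (F x + (z - x) * d) / z - F x / x := by field_simp; ring
    _ ≤ F z / z - F x / x := by gcongr

section PrimitiveDivSelf

variable {ψ : ℝ → ℝ} {L U : ℝ}

theorem MonotoneOn.le_slope_intervalIntegral_div_self (hψ : MonotoneOn ψ (Icc L U))
    (hL : 0 < L) {x z : ℝ} (hx : x ∈ Icc L U) (hz : z ∈ Ioc x U) :
    (ψ x - (∫ u in L..x, ψ u) / x) / z ≤ slope (fun t => (∫ u in L..t, ψ u) / t) x z := by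
  have hxz : Icc x z ⊆ Icc L U := Icc_subset_Icc hx.1 hz.2
  have hint : ∀ {a b}, a ∈ Icc L U → b ∈ Icc L U → IntervalIntegrable ψ volume a b :=
    fun ha hb => (hψ.mono (uIcc_subset_Icc ha hb)).intervalIntegrable
  have hLmem : L ∈ Icc L U := left_mem_Icc.2 (hx.1.trans hx.2)
  have hzmem : z ∈ Icc L U := hxz (right_mem_Icc.2 hz.1.le)
  refine le_slope_div_self (F := fun t => ∫ u in L..t, ψ u) (hL.trans_le hx.1) hz.1 ?_
  rw [← intervalIntegral.integral_add_adjacent_intervals (hint hLmem hx) (hint hx hzmem)]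
  linarith [(hψ.mono hxz).mul_le_intervalIntegral hz.1.le]

theorem MonotoneOn.frequently_slope_neg_intervalIntegral_div_self_lt
    (hψ : MonotoneOn ψ (Icc L U)) (hL : 0 < L) {x r : ℝ} (hx : x ∈ Ico L U)
    (hr : -((ψ x - (∫ u in L..x, ψ u) / x) / x) < r) :
    ∃ᶠ z in 𝓝[>] x, slope (fun t => -((∫ u in L..t, ψ u) / t)) x z < r := by
  have hx0 : 0 < x := hL.trans_le hx.1
  have hlim : Tendsto (fun z => -((ψ x - (∫ u in L..x, ψ u) / x) / z)) (𝓝[>] x)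
      (𝓝 (-((ψ x - (∫ u in L..x, ψ u) / x) / x))) :=
    ((tendsto_const_nhds.div tendsto_id hx0.ne').neg).mono_left nhdsWithin_le_nhds
  refine Eventually.frequently ?_
  filter_upwards [hlim.eventually_lt_const hr, Ioc_mem_nhdsGT hx.2] with z hzr hz
  rw [slope_neg]
  have hslope := hψ.le_slope_intervalIntegral_div_self hL (Ico_subset_Icc_self hx) hz
  exact (neg_le_neg hslope).trans_lt hzr

theorem MonotoneOn.mul_log_le_intervalIntegral_div_self (hψ : MonotoneOn ψ (Icc L U))
    (hL : 0 < L) {c : ℝ} (hc : ∀ x ∈ Icc L U, c ≤ ψ x - (∫ u in L..x, ψ u) / x) :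
    ∀ p ∈ Icc L U, c * Real.log (p / L) ≤ (∫ u in L..p, ψ u) / p := by
  intro p hp
  have hLU : L ≤ U := hp.1.trans hp.2
  have hpos : ∀ x ∈ Icc L U, 0 < x := fun x hx => hL.trans_le hx.1
  have hlog : ∀ x ∈ Icc L U, HasDerivAt (fun t => c * Real.log (t / L)) (c / x) x := fun x hx =>
    ((((hasDerivAt_id' x).div_const L).log (div_pos (hpos x hx) hL).ne').const_mul c).congr_deriv
      (by field_simp)
  have hcont : ContinuousOn (fun t => (∫ u in L..t, ψ u) / t) (Icc L U) := by
    refine ContinuousOn.div ?_ continuousOn_id fun x hx => (hpos x hx).ne'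
    have hprim := intervalIntegral.continuousOn_primitive_interval' (a := L) (μ := volume)
      (hψ.mono (uIcc_of_le hLU).subset).intervalIntegrable left_mem_uIcc
    rwa [uIcc_of_le hLU] at hprim
  have hcomp := image_le_of_liminf_slope_right_le_deriv_boundary
    (B := fun t => -(c * Real.log (t / L))) (B' := fun t => -(c / t)) hcont.neg
    (by simp [div_self hL.ne'])
    (fun x hx => (hlog x hx).continuousAt.continuousWithinAt.neg)
    (fun x hx => (hlog x (Ico_subset_Icc_self hx)).neg.hasDerivWithinAt)
    (fun x hx r hr => hψ.frequently_slope_neg_intervalIntegral_div_self_lt hL hx <|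
      (neg_le_neg (div_le_div_of_nonneg_right (hc x (Ico_subset_Icc_self hx))
        (hpos x (Ico_subset_Icc_self hx)).le)).trans_lt hr)
    hp
  simpa using hcomp

end PrimitiveDivSelf

theorem utilization_gronwall_bound_general (L U C α : ℝ) (hL : 0 < L)
    (ψ : ℝ → ℝ) (hmono : MonotoneOn ψ (Set.Icc L U))
    (hineq : ∀ p ∈ Set.Icc L U, p * ψ p - (∫ u in L..p, ψ u) ≥ p * C / α) :
    ∀ p ∈ Set.Icc L U, ψ p ≥ (C / α) * (1 + Real.log (p / L)) := by
  have hψ_ge : ∀ p ∈ Icc L U, C / α ≤ ψ p - (∫ u in L..p, ψ u) / p := fun p hp => by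
    have hp0 : 0 < p := hL.trans_le hp.1
    rw [le_sub_iff_add_le, ← le_sub_iff_add_le', div_le_iff₀ hp0]
    linarith [mul_div_assoc p C α ▸ hineq p hp]
  intro p hp
  have hlog := hmono.mul_log_le_intervalIntegral_div_self hL hψ_ge p hp
  linarith [hψ_ge p hp]

theorem utilization_gronwall_bound (L U C α : ℝ) (hL : 0 < L) (hLU : L ≤ U)
    (hC : 0 < C) (hα : 0 < α)
    (ψ : ℝ → ℝ) (hmono : MonotoneOn ψ (Set.Icc L U))
    (hrange : ∀ p ∈ Set.Icc L U, ψ p ∈ Set.Icc 0 C)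
    (hineq : ∀ p ∈ Set.Icc L U, p * ψ p - (∫ u in L..p, ψ u) ≥ p * C / α) :
    ∀ p ∈ Set.Icc L U, ψ p ≥ (C / α) * (1 + Real.log (p / L)) :=
  utilization_gronwall_bound_general L U C α hL ψ hmono hineq
end
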